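/- arXiv:0907.0857 — 8 statements merged into one kernel-verified Lean document; each statement's English description precedes it below -/
import Mathlib

section
/- Let n be a positive even integer and let U be a rational spectral unit of finite order (an n×n circulant matrix with rational entries satisfying U·Uᵀ = I and U^m = I for some m ≥ 1). Then every eigenvalue of U is an n-th root of unity; that is, every Fourier coefficient ξ_l of its first column u satisfies ξ_l^n = 1. -/
/-!
The Fourier coefficient `ξ_l` is the eigenvalue of `M(u)` on the character vector
`j ↦ exp(-2πi·l·j/n)`, so `U^m = 1` makes `ξ_l` a root of unity; since `u` is rational, `ξ_l` lies
in the cyclotomic field `ℚ(ζ_n)`. A primitive `N`-th root of unity there forces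
`φ(lcm N n) ≤ [ℚ(ζ_n) : ℚ] = φ(n)`, and for even `n` this leaves only `lcm N n = n`, i.e. `N ∣ n`.
-/

open Matrix

/-- The Fourier coefficient of `u : ZMod n → ℂ` at `l`:
`ξ_l = ∑_{t} u(t) · exp(2πi·l·t/n)`. -/
noncomputable def zmodFourier (n : ℕ) [NeZero n] (u : ZMod n → ℂ) (l : ZMod n) : ℂ :=
  ∑ t : ZMod n, u t * Complex.exp (2 * Real.pi * Complex.I * ((l.val : ℂ) * (t.val : ℂ)) / n)

open Polynomial

theorem Nat.eq_of_dvd_of_totient_le {n N : ℕ} (hn : Even n) (hN : N ≠ 0) (hdvd : n ∣ N)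
    (hle : N.totient ≤ n.totient) : N = n := by
  obtain ⟨r, rfl⟩ := hdvd
  have hn0 : n ≠ 0 := left_ne_zero_of_mul hN
  have hr0 : r ≠ 0 := right_ne_zero_of_mul hN
  have hφn : 0 < n.totient := Nat.totient_pos.2 (Nat.pos_of_ne_zero hn0)
  have hφr : r.totient ≤ 1 :=
    le_of_mul_le_mul_left ((Nat.totient_super_multiplicative n r).trans (by omega)) hφn
  rcases (Nat.dvd_prime Nat.prime_two).1
      (Nat.dvd_two_of_totient_le_one (Nat.pos_of_ne_zero hr0) hφr) with rfl | rfl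
  · rw [mul_one]
  -- doubling an even number doubles its totient
  · rw [mul_comm, Nat.totient_mul_of_prime_of_dvd Nat.prime_two (even_iff_two_dvd.1 hn)] at hle
    omega

theorem IsCyclotomicExtension.pow_eq_one_of_isOfFinOrder {n : ℕ} [NeZero n] {A : Type*}
    [CommRing A] [IsDomain A] [Algebra ℚ A] [IsCyclotomicExtension {n} ℚ A] (hn : Even n)
    {x : A} (hx : IsOfFinOrder x) : x ^ n = 1 := by
  have := IsCyclotomicExtension.finiteDimensional {n} ℚ A
  have hlcm : (orderOf x).lcm n ≠ 0 := Nat.lcm_ne_zero hx.orderOf_pos.ne' (NeZero.ne n)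
  have hle := (IsPrimitiveRoot.orderOf x).lcm_totient_le_finrank (zeta_spec n ℚ A)
    (cyclotomic.irreducible_rat (Nat.pos_of_ne_zero hlcm))
  rw [IsCyclotomicExtension.finrank A (cyclotomic.irreducible_rat (NeZero.pos n))] at hle
  have hlcm_eq := Nat.eq_of_dvd_of_totient_le hn hlcm (Nat.dvd_lcm_right _ _) hle
  exact orderOf_dvd_iff_pow_eq_one.1 (hlcm_eq ▸ Nat.dvd_lcm_left _ _)

theorem IsPrimitiveRoot.pow_eq_one_of_mem_adjoin {L : Type*} [Field L] [CharZero L] {n : ℕ}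
    [NeZero n] {ω : L} (hω : IsPrimitiveRoot ω n) (hn : Even n) {x : L}
    (hxω : x ∈ Algebra.adjoin ℚ {ω}) (hx : IsOfFinOrder x) : x ^ n = 1 := by
  have := hω.adjoin_isCyclotomicExtension ℚ
  have hx' : IsOfFinOrder (⟨x, hxω⟩ : Algebra.adjoin ℚ {ω}) :=
    (Function.Injective.isOfFinOrder_iff (f := (Algebra.adjoin ℚ {ω}).val.toMonoidHom)
      Subtype.val_injective).1 hx
  simpa using congrArg Subtype.val (IsCyclotomicExtension.pow_eq_one_of_isOfFinOrder hn hx')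

theorem Matrix.circulant_mulVec_addChar {G R : Type*} [AddCommGroup G] [Fintype G] [CommRing R]
    (c : G → R) (ψ : AddChar G R) :
    circulant c *ᵥ (fun j => ψ (-j)) = (∑ t, c t * ψ t) • fun j => ψ (-j) := by
  ext i
  simp only [mulVec, dotProduct, circulant_apply, Pi.smul_apply, smul_eq_mul, Finset.sum_mul]
  refine Fintype.sum_equiv (Equiv.subLeft i) _ _ fun j => ?_
  simp only [Equiv.subLeft_apply, mul_assoc, ← AddChar.map_add_eq_mul]
  congr 2
  abel

theorem Matrix.pow_eq_one_of_mulVec_eq_smul {ι R : Type*} [Fintype ι] [DecidableEq ι]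
    [CommRing R] [IsDomain R] {A : Matrix ι ι R} {v : ι → R} {a : R} (hv : v ≠ 0)
    (hA : A *ᵥ v = a • v) {m : ℕ} (hm : A ^ m = 1) : a ^ m = 1 := by
  have hpow : ∀ k : ℕ, (A ^ k) *ᵥ v = a ^ k • v := by
    intro k
    induction k with
    | zero => simp
    | succ k ih => rw [pow_succ, ← mulVec_mulVec, hA, mulVec_smul, ih, smul_smul, pow_succ']
  refine smul_left_injective R hv ?_
  simpa [hm] using (hpow m).symm

theorem zmodFourier_eq_sum_stdAddChar (n : ℕ) [NeZero n] (u : ZMod n → ℂ) (l : ZMod n) :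
    zmodFourier n u l = ∑ t, u t * ZMod.stdAddChar (l * t) := by
  refine Finset.sum_congr rfl fun t _ => ?_
  have hlt : l * t = ((l.val * t.val : ℕ) : ZMod n) := by simp
  rw [hlt, ZMod.stdAddChar_apply, ZMod.toCircle_natCast]
  push_cast
  ring

theorem ZMod.isPrimitiveRoot_stdAddChar_one (n : ℕ) [NeZero n] :
    IsPrimitiveRoot (stdAddChar (1 : ZMod n)) n := by
  have h := stdAddChar_coe (N := n) 1
  rw [Int.cast_one, Int.cast_one, mul_one] at h
  exact h ▸ Complex.isPrimitiveRoot_exp n (NeZero.ne n)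

theorem ZMod.stdAddChar_eq_pow (n : ℕ) [NeZero n] (k : ZMod n) :
    stdAddChar k = stdAddChar (1 : ZMod n) ^ k.val := by
  rw [← AddChar.map_nsmul_eq_pow, nsmul_one, natCast_zmod_val]

theorem zmodFourier_mem_adjoin (n : ℕ) [NeZero n] (u : ZMod n → ℚ) (l : ZMod n) :
    zmodFourier n (fun t => (u t : ℂ)) l ∈ Algebra.adjoin ℚ {ZMod.stdAddChar (1 : ZMod n)} := by
  rw [zmodFourier_eq_sum_stdAddChar]
  refine sum_mem fun t _ => mul_mem ?_ ?_
  · exact (eq_ratCast (algebraMap ℚ ℂ) (u t)) ▸ Subalgebra.algebraMap_mem _ (u t)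
  · rw [ZMod.stdAddChar_eq_pow n (l * t)]
    exact pow_mem (Algebra.self_mem_adjoin_singleton ℚ (ZMod.stdAddChar (1 : ZMod n))) _

theorem even_spectral_unit_eigenvalues_are_nth_roots_general
    (n : ℕ) [NeZero n] (hneven : Even n)
    (u : ZMod n → ℚ)
    (hfin : ∃ m : ℕ, 1 ≤ m ∧ Matrix.circulant u ^ m = 1) :
    ∀ l : ZMod n, (zmodFourier n (fun t => (u t : ℂ)) l) ^ n = 1 := by
  obtain ⟨m, hm, hUm⟩ := hfin
  intro l
  set ψ := (ZMod.stdAddChar (N := n)).mulShift l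
  have heigen : circulant (fun t => (u t : ℂ)) *ᵥ (fun j => ψ (-j)) =
      zmodFourier n (fun t => (u t : ℂ)) l • fun j => ψ (-j) := by
    rw [zmodFourier_eq_sum_stdAddChar]
    exact circulant_mulVec_addChar _ ψ
  have hv : (fun j => ψ (-j)) ≠ 0 := fun h => by simpa using congrFun h 0
  have hUmℂ : circulant (fun t => (u t : ℂ)) ^ m = 1 := by
    have h := congrArg (algebraMap ℚ ℂ).mapMatrix hUm
    rw [map_pow, map_one, RingHom.mapMatrix_apply, map_circulant] at h
    simpa using h
  have hξm := pow_eq_one_of_mulVec_eq_smul hv heigen hUmℂ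
  exact (ZMod.isPrimitiveRoot_stdAddChar_one n).pow_eq_one_of_mem_adjoin hneven
    (zmodFourier_mem_adjoin n u l) (isOfFinOrder_iff_pow_eq_one.2 ⟨m, hm, hξm⟩)

/-- If `n` is even and `U = M(u)` is a rational circulant matrix with `U·Uᵀ = 1` and
`U^m = 1` for some `m ≥ 1`, then every Fourier coefficient (eigenvalue) `ξ_l` of `u`
satisfies `ξ_l ^ n = 1`. -/
theorem even_spectral_unit_eigenvalues_are_nth_roots
    (n : ℕ) [NeZero n] (hn : 0 < n) (hneven : Even n)
    (u : ZMod n → ℚ)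
    (hunit : Matrix.circulant u * (Matrix.circulant u)ᵀ = 1)
    (hfin : ∃ m : ℕ, 1 ≤ m ∧ Matrix.circulant u ^ m = 1) :
    ∀ l : ZMod n, (zmodFourier n (fun t => (u t : ℂ)) l) ^ n = 1 :=
  even_spectral_unit_eigenvalues_are_nth_roots_general n hneven u hfin
end

section
/- Let n be a positive odd integer and let U be a rational spectral unit of finite order with Fourier coefficients (ξ_l)_{l ∈ ℤ/nℤ}. Let j ∈ ℤ/nℤ, j ≠ 0, and let k be an integer coprime with n. If ξ_j^n = 1, then ξ_{k·j} = ξ_j^k. If ξ_j^n = −1 (i.e. ξ_j is a 2n-th but not an n-th root of unity), then ξ_{k·j} = ξ_j^k when k is odd, and ξ_{k·j} = −ξ_j^k when k is even. -/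
open Matrix

/-!
`ξ_l` is a rational combination of powers of `ζ = exp(2πi/n)`, and the automorphism
`ζ ↦ ζ^k` of `ℚ(ζ)` maps `ξ_j` to `ξ_{kj}`. If `ξ_j = c·η` with `c` rational and `η` an
`n`-th root of unity, it maps `ξ_j` to `c·η^k` as well. For odd `n` this applies to `c = 1`
when `ξ_j^n = 1` and to `c = -1`, `η = -ξ_j` when `ξ_j^n = -1`.
-/

open Polynomial

theorem IsPrimitiveRoot.aeval_eq_zero_of_aeval_eq_zero {K : Type*} [Field K] [CharZero K]
    {n : ℕ} (hn : 0 < n) {ζ ζ' : K} (hζ : IsPrimitiveRoot ζ n) (hζ' : IsPrimitiveRoot ζ' n)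
    {p : ℚ[X]} (hp : aeval ζ p = 0) : aeval ζ' p = 0 := by
  have hmin : minpoly ℚ ζ = minpoly ℚ ζ' := by
    rw [← cyclotomic_eq_minpoly_rat hζ hn, ← cyclotomic_eq_minpoly_rat hζ' hn]
  exact aeval_eq_zero_of_dvd_aeval_eq_zero (hmin ▸ minpoly.dvd ℚ ζ hp) (minpoly.aeval ℚ ζ')

theorem AddChar.map_zmod_eq_pow_val {M : Type*} [Monoid M] {n : ℕ} [NeZero n] (ψ : AddChar (ZMod n) M)
    (x : ZMod n) : ψ x = ψ 1 ^ x.val := by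
  rw [← AddChar.map_nsmul_eq_pow, nsmul_one, ZMod.natCast_zmod_val]

theorem AddChar.sum_rat_mul_map_intCast_mul_of_eq {K ι : Type*} [Field K] [CharZero K]
    [Fintype ι] {n : ℕ} [NeZero n] (ψ : AddChar (ZMod n) K) (hψ : IsPrimitiveRoot (ψ 1) n)
    (u : ι → ℚ) (f : ι → ZMod n) {c : ℚ} {η : K} (hη : η ^ n = 1)
    (h : ∑ i, (u i : K) * ψ (f i) = c * η) {k : ℤ} (hk : k.gcd n = 1) :
    ∑ i, (u i : K) * ψ (k * f i) = c * η ^ k := by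
  obtain ⟨a, -, rfl⟩ := hψ.eq_pow_of_pow_eq_one hη
  set p : ℚ[X] := ∑ i, C (u i) * X ^ (f i).val - C c * X ^ a
  have hp : ∀ x : K, aeval x p = ∑ i, (u i : K) * x ^ (f i).val - c * x ^ a := by
    simp [p, map_sum]
  have hζ : aeval (ψ 1) p = 0 := by
    simp only [hp, ← ψ.map_zmod_eq_pow_val, h, sub_self]
  have hζk := hp _ ▸ hψ.aeval_eq_zero_of_aeval_eq_zero (NeZero.pos n)
    (hψ.zpow_of_gcd_eq_one k hk) hζ
  have hpow : ∀ m : ℕ, (ψ 1 ^ k) ^ m = (ψ 1 ^ m) ^ k := by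
    intro m
    rw [← zpow_natCast, ← zpow_natCast, ← _root_.zpow_mul, ← _root_.zpow_mul, mul_comm]
  have hterm : ∀ x : ZMod n, (ψ 1 ^ k) ^ x.val = ψ (k * x) := by
    intro x
    rw [hpow, ← ψ.map_zmod_eq_pow_val, ← ψ.map_zsmul_eq_zpow, zsmul_eq_mul]
  simp only [hterm, hpow a] at hζk
  exact sub_eq_zero.mp hζk

theorem zmodFourier_intCast_mul_of_eq {n : ℕ} [NeZero n] (u : ZMod n → ℚ) (j : ZMod n)
    {c : ℚ} {η : ℂ} (hη : η ^ n = 1) (h : zmodFourier n (fun t => (u t : ℂ)) j = c * η)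
    {k : ℤ} (hk : k.gcd n = 1) :
    zmodFourier n (fun t => (u t : ℂ)) (k * j) = c * η ^ k := by
  have hψ : IsPrimitiveRoot (ZMod.stdAddChar (1 : ZMod n)) n := by
    rw [← Nat.cast_one, ZMod.stdAddChar_apply, ZMod.toCircle_natCast]
    simpa [mul_div_assoc] using Complex.isPrimitiveRoot_exp n (NeZero.ne n)
  rw [zmodFourier_eq_sum_stdAddChar] at h ⊢
  simp only [mul_assoc]
  exact ZMod.stdAddChar.sum_rat_mul_map_intCast_mul_of_eq hψ u (j * ·) hη h hk

theorem odd_spectral_unit_galois_condition_general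
    (n : ℕ) [NeZero n] (hnodd : Odd n)
    (u : ZMod n → ℚ)
    (j : ZMod n) (k : ℤ) (hk : Int.gcd k n = 1) :
    ((zmodFourier n (fun t => (u t : ℂ)) j) ^ n = 1 →
      zmodFourier n (fun t => (u t : ℂ)) ((k : ZMod n) * j)
        = (zmodFourier n (fun t => (u t : ℂ)) j) ^ k) ∧
    ((zmodFourier n (fun t => (u t : ℂ)) j) ^ n = -1 →
      (Odd k →
        zmodFourier n (fun t => (u t : ℂ)) ((k : ZMod n) * j)
          = (zmodFourier n (fun t => (u t : ℂ)) j) ^ k) ∧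
      (Even k →
        zmodFourier n (fun t => (u t : ℂ)) ((k : ZMod n) * j)
          = -((zmodFourier n (fun t => (u t : ℂ)) j) ^ k))) := by
  set ξ := zmodFourier n (fun t => (u t : ℂ)) j
  refine ⟨fun h1 => ?_, fun hneg1 => ?_⟩
  · simpa using zmodFourier_intCast_mul_of_eq u j (c := 1) h1 (by simp [ξ]) hk
  · have hη : (-ξ) ^ n = 1 := by rw [hnodd.neg_pow, hneg1, neg_neg]
    have hconj := zmodFourier_intCast_mul_of_eq u j (c := -1) hη (by simp [ξ]) hk
    refine ⟨fun hkodd => ?_, fun hkeven => ?_⟩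
    · simpa [hkodd.neg_zpow] using hconj
    · simpa [hkeven.neg_zpow] using hconj

/-- Odd `n` case: for a rational spectral unit of finite order, for `j ≠ 0` and `k` coprime
with `n`: if `ξ_j^n = 1` then `ξ_{k·j} = ξ_j^k`; if `ξ_j^n = -1` then `ξ_{k·j} = ξ_j^k`
for odd `k` and `ξ_{k·j} = -ξ_j^k` for even `k`. -/
theorem odd_spectral_unit_galois_condition
    (n : ℕ) [NeZero n] (hn : 0 < n) (hnodd : Odd n)
    (u : ZMod n → ℚ)
    (hunit : Matrix.circulant u * (Matrix.circulant u)ᵀ = 1)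
    (hfin : ∃ m : ℕ, 1 ≤ m ∧ Matrix.circulant u ^ m = 1)
    (j : ZMod n) (hj : j ≠ 0) (k : ℤ) (hk : Int.gcd k n = 1) :
    ((zmodFourier n (fun t => (u t : ℂ)) j) ^ n = 1 →
      zmodFourier n (fun t => (u t : ℂ)) ((k : ZMod n) * j)
        = (zmodFourier n (fun t => (u t : ℂ)) j) ^ k) ∧
    ((zmodFourier n (fun t => (u t : ℂ)) j) ^ n = -1 →
      (Odd k →
        zmodFourier n (fun t => (u t : ℂ)) ((k : ZMod n) * j)
          = (zmodFourier n (fun t => (u t : ℂ)) j) ^ k) ∧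
      (Even k →
        zmodFourier n (fun t => (u t : ℂ)) ((k : ZMod n) * j)
          = -((zmodFourier n (fun t => (u t : ℂ)) j) ^ k))) :=
  odd_spectral_unit_galois_condition_general n hnodd u j k hk
end

section
/- Let n be a positive even integer and let ξ : ℤ/nℤ → ℂ satisfy: ξ_0 ∈ {1, −1}; every ξ_l is an n-th root of unity; and ξ_{k·j} = ξ_j^k for every j ≠ 0 and every integer k coprime with n. Then the vector u defined by the inverse Fourier transform u(t) = (1/n)·∑_{l=0}^{n−1} ξ_l·exp(−2πi·l·t/n) has all its entries rational (each u(t) is a rational real number); equivalently, the circulant matrix with eigenvalues (ξ_l) has rational entries. -/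
/-!
Write `ζ = exp(-2πi/n)`. The sum `S = ∑ₗ ξₗ ζ^{lt}` is a sum of `n`-th roots of unity
`ηₗ = ξₗ ζ^{lt}`, and the Galois condition says `η_{kl} = ηₗ^k` for every unit `k` of `ℤ/nℤ`
(at `l = 0` because `ξ₀ = ±1` is fixed by odd powers, and `k` is odd when `ξ₀ = -1`, since then
`n` is even). Averaging over the units, `φ(n) S = ∑ₗ ∑ₖ ηₗ^k`, and each inner sum is a Ramanujan
sum: by Möbius inversion of the coprimality condition it is `∑_{d ∣ n} μ(d) ∑_{j < n/d} (ηₗ^d)^j`,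
an integer. Hence `S`, and `u(t) = S/n`, is rational.
-/

open Finset ArithmeticFunction
open scoped ArithmeticFunction.Moebius

theorem geom_sum_eq_ite_of_pow_eq_one {R : Type*} [CommRing R] [IsDomain R] [DecidableEq R]
    {x : R} {N : ℕ} (hx : x ^ N = 1) : ∑ i ∈ range N, x ^ i = if x = 1 then (N : R) else 0 := by
  split_ifs with h
  · simp [h]
  · have := geom_sum_mul x N
    rw [hx, sub_self, mul_eq_zero] at this
    exact this.resolve_right (sub_ne_zero.mpr h)

theorem Nat.sum_divisors_filter_dvd_moebius {n : ℕ} (hn : n ≠ 0) (a : ℕ) :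
    ∑ d ∈ n.divisors with d ∣ a, μ d = if n.Coprime a then 1 else 0 := by
  have hfilter : {d ∈ n.divisors | d ∣ a} = (n.gcd a).divisors := by
    rw [← Nat.divisors_filter_dvd_of_dvd hn (Nat.gcd_dvd_left n a)]
    exact filter_congr fun d hd => by
      rw [Nat.dvd_gcd_iff, and_iff_right (Nat.dvd_of_mem_divisors hd)]
  rw [hfilter, ← coe_mul_zeta_apply, moebius_mul_coe_zeta, one_apply]

theorem sum_range_filter_coprime_eq_sum_moebius {M : Type*} [AddCommGroup M] {n : ℕ}
    (hn : n ≠ 0) (f : ℕ → M) :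
    ∑ a ∈ range n with n.Coprime a, f a =
      ∑ d ∈ n.divisors, μ d • ∑ a ∈ range n with d ∣ a, f a := by
  simp_rw [smul_sum, sum_filter]
  rw [sum_comm]
  refine sum_congr rfl fun a _ => ?_
  rw [← sum_filter, ← sum_smul, Nat.sum_divisors_filter_dvd_moebius hn, ite_smul, one_smul,
    zero_smul]

theorem sum_range_mul_filter_dvd {M : Type*} [AddCommMonoid M] {d : ℕ} (hd : 0 < d) (c : ℕ)
    (f : ℕ → M) : ∑ a ∈ range (d * c) with d ∣ a, f a = ∑ j ∈ range c, f (d * j) := by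
  refine sum_nbij' (· / d) (d * ·) (fun a ha => ?_) (fun j hj => ?_) (fun a ha => ?_)
    (fun j _ => Nat.mul_div_cancel_left j hd) (fun a ha => ?_)
  · rw [mem_filter, mem_range] at ha
    exact mem_range.mpr (Nat.div_lt_of_lt_mul ha.1)
  · rw [mem_range] at hj
    exact mem_filter.mpr ⟨mem_range.mpr (Nat.mul_lt_mul_of_pos_left hj hd), dvd_mul_right d j⟩
  · exact Nat.mul_div_cancel' (mem_filter.mp ha).2
  · rw [Nat.mul_div_cancel' (mem_filter.mp ha).2]

theorem ZMod.sum_units_eq_sum_range_filter_coprime {M : Type*} [AddCommMonoid M] (n : ℕ)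
    [NeZero n] (f : ℕ → M) :
    ∑ k : (ZMod n)ˣ, f (k : ZMod n).val = ∑ a ∈ range n with n.Coprime a, f a := by
  refine sum_bij' (fun k _ => (k : ZMod n).val)
    (fun a ha => ZMod.unitOfCoprime a (mem_filter.mp ha).2.symm) (fun k _ => ?_)
    (fun _ _ => mem_univ _) (fun k _ => ?_) (fun a ha => ?_) (fun _ _ => rfl)
  · exact mem_filter.mpr ⟨mem_range.mpr (ZMod.val_lt _), (ZMod.val_coe_unit_coprime k).symm⟩
  · exact Units.ext (by rw [ZMod.coe_unitOfCoprime, ZMod.natCast_zmod_val])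
  · rw [ZMod.coe_unitOfCoprime, ZMod.val_cast_of_lt (mem_range.mp (mem_filter.mp ha).1)]

theorem exists_int_sum_units_pow_val_eq {R : Type*} [CommRing R] [IsDomain R] {n : ℕ} [NeZero n]
    {x : R} (hx : x ^ n = 1) : ∃ z : ℤ, ∑ k : (ZMod n)ˣ, x ^ (k : ZMod n).val = z := by
  classical
  refine ⟨∑ d ∈ n.divisors, μ d * if x ^ d = 1 then ((n / d : ℕ) : ℤ) else 0, ?_⟩
  rw [ZMod.sum_units_eq_sum_range_filter_coprime n (x ^ ·),
    sum_range_filter_coprime_eq_sum_moebius (NeZero.ne n), Int.cast_sum]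
  refine sum_congr rfl fun d hd => ?_
  obtain ⟨c, rfl⟩ := Nat.dvd_of_mem_divisors hd
  have hd0 : 0 < d := Nat.pos_of_mem_divisors hd
  simp_rw [sum_range_mul_filter_dvd hd0, pow_mul]
  rw [geom_sum_eq_ite_of_pow_eq_one (by rw [← pow_mul, hx]), Nat.mul_div_cancel_left c hd0,
    zsmul_eq_mul, Int.cast_mul, apply_ite Int.cast, Int.cast_natCast, Int.cast_zero]

theorem exists_rat_sum_eq_of_apply_units_mul_eq_pow {K : Type*} [Field K] [CharZero K] {n : ℕ}
    [NeZero n] {η : ZMod n → K} (hroot : ∀ m, η m ^ n = 1)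
    (hmul : ∀ (k : (ZMod n)ˣ) m, η (k * m) = η m ^ (k : ZMod n).val) :
    ∃ q : ℚ, ∑ m, η m = q := by
  choose z hz using fun m => exists_int_sum_units_pow_val_eq (hroot m)
  have hcard : (Fintype.card (ZMod n)ˣ : K) * ∑ m, η m = ∑ m, (z m : K) :=
    calc (Fintype.card (ZMod n)ˣ : K) * ∑ m, η m = ∑ k : (ZMod n)ˣ, ∑ m, η (k * m) := by
          rw [← nsmul_eq_mul, ← card_univ, ← sum_const]
          exact sum_congr rfl fun k _ => (Fintype.sum_equiv (Units.mulLeft k) _ _ fun _ => rfl).symm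
      _ = ∑ m, ∑ k : (ZMod n)ˣ, η m ^ (k : ZMod n).val := by simp_rw [hmul]; exact sum_comm
      _ = ∑ m, (z m : K) := sum_congr rfl fun m _ => hz m
  refine ⟨(∑ m, z m : ℤ) / Fintype.card (ZMod n)ˣ, ?_⟩
  rw [Rat.cast_div, Rat.cast_natCast, eq_div_iff (Nat.cast_ne_zero.mpr Fintype.card_ne_zero),
    mul_comm, hcard, Rat.cast_intCast, Int.cast_sum]

theorem pow_eq_self_of_sq_eq_one {M : Type*} [Monoid M] {ε : M} (h2 : ε ^ 2 = 1) {n k : ℕ}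
    (hn : ε ^ n = 1) (hnk : n.Coprime k) : ε ^ k = ε := by
  rcases Nat.even_or_odd k with hk | ⟨j, rfl⟩
  · obtain ⟨j, rfl⟩ := (hnk.coprime_dvd_right hk.two_dvd).odd_of_right
    rw [pow_succ, pow_mul, h2, one_pow, one_mul] at hn
    rw [hn, one_pow]
  · rw [pow_succ, pow_mul, h2, one_pow, one_mul]

theorem ZMod.apply_units_mul_eq_pow_val {M : Type*} [DivInvMonoid M] {n : ℕ} [NeZero n]
    {ξ : ZMod n → M} (hsq : ξ 0 ^ 2 = 1) (hpow : ξ 0 ^ n = 1)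
    (hgal : ∀ j : ZMod n, j ≠ 0 → ∀ k : ℤ, Int.gcd k n = 1 → ξ ((k : ZMod n) * j) = ξ j ^ k)
    (k : (ZMod n)ˣ) (m : ZMod n) : ξ (k * m) = ξ m ^ (k : ZMod n).val := by
  have hk := ZMod.val_coe_unit_coprime k
  by_cases hm : m = 0
  · rw [hm, mul_zero, pow_eq_self_of_sq_eq_one hsq hpow hk.symm]
  · have := hgal m hm (k : ZMod n).val (by rw [Int.gcd_natCast_natCast]; exact hk)
    rwa [Int.cast_natCast, ZMod.natCast_zmod_val, zpow_natCast] at this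

theorem AddChar.map_mul_eq_pow_val {M : Type*} [Monoid M] {n : ℕ} [NeZero n]
    (ψ : AddChar (ZMod n) M) (a x : ZMod n) : ψ (a * x) = ψ x ^ a.val := by
  rw [← ZMod.natCast_zmod_val a, ← nsmul_eq_mul, map_nsmul_eq_pow, ZMod.natCast_zmod_val]

theorem AddChar.map_pow_eq_one {M : Type*} [Monoid M] {n : ℕ} (ψ : AddChar (ZMod n) M)
    (x : ZMod n) : ψ x ^ n = 1 := by
  rw [← map_nsmul_eq_pow, nsmul_eq_mul, ZMod.natCast_self, zero_mul, map_zero_eq_one]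

theorem ZMod.exp_neg_eq_stdAddChar {n : ℕ} [NeZero n] (l t : ZMod n) :
    Complex.exp (-(2 * Real.pi * Complex.I * ((l.val : ℂ) * (t.val : ℂ))) / n) =
      ZMod.stdAddChar (-(l * t)) := by
  have hcast : -(l * t) = (Int.cast (-(l.val * t.val : ℤ)) : ZMod n) := by
    push_cast
    rw [ZMod.natCast_zmod_val, ZMod.natCast_zmod_val]
  rw [hcast, ZMod.stdAddChar_coe]
  congr 1
  push_cast
  ring

theorem inverse_fourier_of_galois_condition_is_rational_general
    (n : ℕ) [NeZero n]
    (ξ : ZMod n → ℂ)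
    (h0 : ξ 0 = 1 ∨ ξ 0 = -1)
    (hroot : ∀ l : ZMod n, ξ l ^ n = 1)
    (hgal : ∀ j : ZMod n, j ≠ 0 → ∀ k : ℤ, Int.gcd k n = 1 →
      ξ ((k : ZMod n) * j) = ξ j ^ k) :
    ∀ t : ZMod n, ∃ q : ℚ,
      (1 / (n : ℂ)) * ∑ l : ZMod n,
        ξ l * Complex.exp (-(2 * Real.pi * Complex.I * ((l.val : ℂ) * (t.val : ℂ))) / n)
      = (q : ℂ) := by
  intro t
  have hsq : ξ 0 ^ 2 = 1 := by rcases h0 with h | h <;> simp [h]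
  obtain ⟨q, hq⟩ := exists_rat_sum_eq_of_apply_units_mul_eq_pow
    (η := fun l => ξ l * ZMod.stdAddChar (-(l * t)))
    (fun l => by rw [mul_pow, hroot, AddChar.map_pow_eq_one, one_mul])
    (fun k l => by
      rw [ZMod.apply_units_mul_eq_pow_val hsq (hroot 0) hgal, mul_assoc, ← mul_neg,
        AddChar.map_mul_eq_pow_val, mul_pow])
  refine ⟨q / n, ?_⟩
  simp_rw [ZMod.exp_neg_eq_stdAddChar, hq]
  push_cast
  ring

/-- If `n` is even and `ξ : ZMod n → ℂ` satisfies `ξ_0 = ±1`, every `ξ_l` is an `n`-th root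
of unity, and `ξ_{k·j} = ξ_j^k` for every `j ≠ 0` and integer `k` coprime with `n`, then the
inverse Fourier transform `u(t) = (1/n)·∑_l ξ_l·exp(-2πi·l·t/n)` is rational valued. -/
theorem inverse_fourier_of_galois_condition_is_rational
    (n : ℕ) [NeZero n] (hn : 0 < n) (hneven : Even n)
    (ξ : ZMod n → ℂ)
    (h0 : ξ 0 = 1 ∨ ξ 0 = -1)
    (hroot : ∀ l : ZMod n, ξ l ^ n = 1)
    (hgal : ∀ j : ZMod n, j ≠ 0 → ∀ k : ℤ, Int.gcd k n = 1 →
      ξ ((k : ZMod n) * j) = ξ j ^ k) :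
    ∀ t : ZMod n, ∃ q : ℚ,
      (1 / (n : ℂ)) * ∑ l : ZMod n,
        ξ l * Complex.exp (-(2 * Real.pi * Complex.I * ((l.val : ℂ) * (t.val : ℂ))) / n)
      = (q : ℂ) :=
  inverse_fourier_of_galois_condition_is_rational_general n ξ h0 hroot hgal
end

section
/- Let n be a positive even integer, let U be a rational spectral unit of finite order with Fourier coefficients (ξ_l), and let j be a positive divisor of n with 0 < j < n such that n/j is odd. Then ξ_j^{2n/j} = 1, i.e. ξ_j is a power of exp(πi·j/n). -/
open Matrix

/-!
The character `s ↦ exp (-2πi j s / n)` is an eigenvector of `U` with eigenvalue `ξ_j`, so `ξ_j`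
is a root of unity. Since `u` is rational and `exp (2πi j t / n)` is a power of the primitive
`q`-th root of unity `exp (2πi j / n)`, where `q = n / j`, it lies in the `q`-th cyclotomic
field, whose roots of unity all have order dividing `2q`.
-/

open IntermediateField

theorem IsPrimitiveRoot.pow_two_mul_eq_one_of_mem_adjoin {L : Type*} [Field L] [CharZero L]
    {q : ℕ} [NeZero q] {ζ ξ : L} (hζ : IsPrimitiveRoot ζ q) (hξ : ξ ∈ ℚ⟮ζ⟯)
    (hξfin : IsOfFinOrder ξ) : ξ ^ (2 * q) = 1 := by
  have : IsCyclotomicExtension {q} ℚ ℚ⟮ζ⟯ :=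
    (isCyclotomicExtension_singleton_iff_eq_adjoin q ℚ L ℚ⟮ζ⟯ hζ).mpr rfl
  have : NumberField ℚ⟮ζ⟯ := IsCyclotomicExtension.numberField {q} ℚ _
  have hprim : IsPrimitiveRoot (⟨ξ, hξ⟩ : ℚ⟮ζ⟯) (orderOf ξ) :=
    IsPrimitiveRoot.coe_submonoidClass_iff.mp (IsPrimitiveRoot.orderOf ξ)
  exact orderOf_dvd_iff_pow_eq_one.mp
    (hprim.dvd_of_isCyclotomicExtension q hξfin.orderOf_pos.ne')

section Circulant

variable {G R : Type*} [AddCommGroup G] [Fintype G] [CommRing R]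

theorem Matrix.circulant_mulVec_addChar_neg (u : G → R) (ψ : AddChar G R) :
    circulant u *ᵥ (fun s => ψ (-s)) = (∑ t, u t * ψ t) • fun s => ψ (-s) := by
  ext i
  simp only [mulVec, dotProduct, circulant_apply, Pi.smul_apply, smul_eq_mul, Finset.sum_mul]
  refine Fintype.sum_equiv (Equiv.subLeft i) _ _ fun s => ?_
  rw [Equiv.subLeft_apply, mul_assoc, ← AddChar.map_add_eq_mul]
  congr 2
  abel

theorem Matrix.sum_mul_addChar_pow_eq_one [DecidableEq G] {u : G → R} {m : ℕ}
    (hu : circulant u ^ m = 1) (ψ : AddChar G R) : (∑ t, u t * ψ t) ^ m = 1 := by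
  have hpow : ∀ k : ℕ, (circulant u ^ k) *ᵥ (fun s => ψ (-s))
      = (∑ t, u t * ψ t) ^ k • fun s => ψ (-s) := by
    intro k
    induction k with
    | zero => simp
    | succ k ih =>
      rw [pow_succ', ← mulVec_mulVec, ih, mulVec_smul, circulant_mulVec_addChar_neg, smul_smul,
        pow_succ]
  simpa [hu] using (congrFun (hpow m) 0).symm

end Circulant

theorem ZMod.isPrimitiveRoot_stdAddChar_natCast {n j : ℕ} [NeZero n] (hj : j ∣ n) :
    IsPrimitiveRoot (stdAddChar (j : ZMod n)) (n / j) := by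
  have h1 : IsPrimitiveRoot (stdAddChar (1 : ZMod n)) n := by
    have h := stdAddChar_coe (N := n) 1
    push_cast at h
    rw [h, mul_one]
    exact Complex.isPrimitiveRoot_exp n (NeZero.ne n)
  have hj0 : j ≠ 0 := by rintro rfl; exact NeZero.ne n (zero_dvd_iff.mp hj)
  simpa [← AddChar.map_nsmul_eq_pow] using h1.pow_of_dvd hj0 hj

section Fourier

open ZMod

variable {n : ℕ} [NeZero n]

theorem zmodFourier_eq_sum_mulShift (u : ZMod n → ℂ) (l : ZMod n) :
    zmodFourier n u l = ∑ t, u t * stdAddChar.mulShift l t := by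
  refine Finset.sum_congr rfl fun t _ => ?_
  have hlt : l * t = ((l.val * t.val : ℕ) : ZMod n) := by simp
  rw [AddChar.mulShift_apply, hlt, stdAddChar_apply, toCircle_natCast]
  push_cast
  ring_nf

theorem zmodFourier_pow_eq_one {u : ZMod n → ℂ} {m : ℕ} (hu : circulant u ^ m = 1)
    (l : ZMod n) : zmodFourier n u l ^ m = 1 := by
  rw [zmodFourier_eq_sum_mulShift]
  exact sum_mul_addChar_pow_eq_one hu _

theorem zmodFourier_ratCast_mem_adjoin (u : ZMod n → ℚ) (l : ZMod n) :
    zmodFourier n (fun t => (u t : ℂ)) l ∈ ℚ⟮stdAddChar l⟯ := by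
  rw [zmodFourier_eq_sum_mulShift]
  refine sum_mem fun t _ => mul_mem (IntermediateField.algebraMap_mem _ (u t)) ?_
  rw [AddChar.mulShift_apply, mul_comm, ← natCast_zmod_val t, ← nsmul_eq_mul,
    AddChar.map_nsmul_eq_pow]
  exact pow_mem (mem_adjoin_simple_self ℚ _) _

end Fourier

theorem even_spectral_unit_divisor_odd_quotient_general
    (n : ℕ) [NeZero n]
    (u : ZMod n → ℚ)
    (hfin : ∃ m : ℕ, 1 ≤ m ∧ Matrix.circulant u ^ m = 1)
    (j : ℕ) (hjdvd : j ∣ n) :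
    (zmodFourier n (fun t => (u t : ℂ)) (j : ZMod n)) ^ (2 * n / j) = 1 := by
  obtain ⟨m, hm, hum⟩ := hfin
  have : NeZero (n / j) :=
    ⟨fun h => NeZero.ne n (by rw [← Nat.mul_div_cancel' hjdvd, h, mul_zero])⟩
  have humC : circulant (fun t => (u t : ℂ)) ^ m = 1 := by
    have hmap : circulant (fun t => (u t : ℂ)) = (circulant u).map (Rat.castHom ℂ) :=
      (map_circulant u _).symm
    rw [hmap, ← Matrix.map_pow, hum, Matrix.map_one _ (map_zero _) (map_one _)]
  have hfinC : IsOfFinOrder (zmodFourier n (fun t => (u t : ℂ)) j) :=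
    isOfFinOrder_iff_pow_eq_one.mpr ⟨m, hm, zmodFourier_pow_eq_one humC _⟩
  rw [Nat.mul_div_assoc 2 hjdvd]
  exact (ZMod.isPrimitiveRoot_stdAddChar_natCast hjdvd).pow_two_mul_eq_one_of_mem_adjoin
    (zmodFourier_ratCast_mem_adjoin u _) hfinC

/-- For `n` even and a rational spectral unit of finite order, if `j` is a strict positive
divisor of `n` with `n/j` odd, then `ξ_j ^ (2n/j) = 1`. -/
theorem even_spectral_unit_divisor_odd_quotient
    (n : ℕ) [NeZero n] (hn : 0 < n) (hneven : Even n)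
    (u : ZMod n → ℚ)
    (hunit : Matrix.circulant u * (Matrix.circulant u)ᵀ = 1)
    (hfin : ∃ m : ℕ, 1 ≤ m ∧ Matrix.circulant u ^ m = 1)
    (j : ℕ) (hjdvd : j ∣ n) (hjpos : 0 < j) (hjlt : j < n) (hq : Odd (n / j)) :
    (zmodFourier n (fun t => (u t : ℂ)) (j : ZMod n)) ^ (2 * n / j) = 1 :=
  even_spectral_unit_divisor_odd_quotient_general n u hfin j hjdvd
end

section
/- Let n and m be positive integers with n dividing m and φ(n) = φ(m), where φ is Euler's totient function. Then m = n, or n is odd and m = 2n. -/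
/-!
Write `m = n * k` and `g = gcd n k`. The identity `φ g * φ (n * k) = φ n * φ k * g`
together with `φ (n * k) = φ n ≠ 0` gives `φ g = φ k * g`; since `0 < φ g ≤ g`, this forces
`φ k = 1` and `g = 1`, i.e. `k ∈ {1, 2}` with `n` odd when `k = 2`.
-/

namespace Nat

theorem eq_one_of_totient_eq_mul_self {a b : ℕ} (ha : 0 < a) (h : φ a = b * a) :
    a = 1 ∧ b = 1 := by
  have hb : b = 1 := by
    have hpos : 0 < b * a := h ▸ totient_pos.mpr ha
    have hle : b * a ≤ 1 * a := by simpa [← h] using totient_le a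
    have hb1 : b ≤ 1 := le_of_mul_le_mul_right hle ha
    have hb0 : 0 < b := pos_of_mul_pos_left hpos ha.le
    omega
  subst hb
  refine ⟨?_, rfl⟩
  by_contra ha1
  have hlt : φ a < a := totient_lt a (by omega)
  omega

theorem totient_mul_eq_totient_iff {n k : ℕ} (hn : 0 < n) :
    φ (n * k) = φ n ↔ k = 1 ∨ (k = 2 ∧ Odd n) := by
  constructor
  · intro h
    have hgcd : φ (n.gcd k) = φ k * n.gcd k := by
      have hmul := totient_gcd_mul_totient_mul n k
      rw [h, mul_assoc, mul_comm] at hmul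
      exact mul_left_cancel₀ (totient_pos.mpr hn).ne' hmul
    have hk : 0 < k := by
      rcases k.eq_zero_or_pos with rfl | hk
      · simp only [mul_zero, totient_zero] at h
        exact absurd h.symm (totient_pos.mpr hn).ne'
      · exact hk
    obtain ⟨hcop, hφk⟩ := eq_one_of_totient_eq_mul_self (gcd_pos_of_pos_right n hk) hgcd
    rcases totient_eq_one_iff.mp hφk with rfl | rfl
    · exact Or.inl rfl
    · exact Or.inr ⟨rfl, coprime_two_right.mp hcop⟩
  · rintro (rfl | ⟨rfl, hodd⟩)
    · rw [mul_one]
    · rw [totient_mul (coprime_two_right.mpr hodd), totient_two, mul_one]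

end Nat

theorem totient_eq_of_dvd_general
    (n m : ℕ) (hn : 0 < n) (hdvd : n ∣ m)
    (hphi : Nat.totient n = Nat.totient m) :
    m = n ∨ (Odd n ∧ m = 2 * n) := by
  obtain ⟨k, rfl⟩ := hdvd
  rcases (Nat.totient_mul_eq_totient_iff hn).mp hphi.symm with rfl | ⟨rfl, hodd⟩
  · exact Or.inl (mul_one n)
  · exact Or.inr ⟨hodd, mul_comm n 2⟩

/-- If `n ∣ m` with `n, m ≥ 1` and `φ(n) = φ(m)`, then `m = n`, or `n` is odd
and `m = 2n`. -/
theorem totient_eq_of_dvd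
    (n m : ℕ) (hn : 0 < n) (hm : 0 < m) (hdvd : n ∣ m)
    (hphi : Nat.totient n = Nat.totient m) :
    m = n ∨ (Odd n ∧ m = 2 * n) :=
  totient_eq_of_dvd_general n m hn hdvd hphi
end

section
/- Let n be a positive odd integer. Then every element of ℤ/nℤ is a difference of two units: for every x ∈ ℤ/nℤ there exist units a, b ∈ (ℤ/nℤ)^× with x = a − b. -/
/-!
Modulo a prime power `p ^ e` with `p` odd, the ring is local, so one of `x - 1` and `2 - x`
(which sum to `1`) is a unit, and then `x = (x - 1) - (-1)` or `x = 2 - (2 - x)`, `2` being a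
unit. The Chinese remainder theorem glues these decompositions together.
-/

theorem IsLocalRing.exists_units_sub_eq {R : Type*} [Ring R] [IsLocalRing R]
    (h2 : IsUnit (2 : R)) (x : R) : ∃ a b : Rˣ, x = a - b := by
  have hsum : (x - 1) + (2 - x) = 1 := by rw [sub_add_sub_cancel']; norm_num
  rcases isUnit_or_isUnit_of_add_one hsum with h | h
  · exact ⟨h.unit, -1, by simp⟩
  · exact ⟨h2.unit, h.unit, by simp⟩

theorem Prod.exists_units_sub_eq {R S : Type*} [Ring R] [Ring S]
    (hR : ∀ x : R, ∃ a b : Rˣ, x = a - b) (hS : ∀ y : S, ∃ a b : Sˣ, y = a - b) (z : R × S) :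
    ∃ a b : (R × S)ˣ, z = a - b := by
  obtain ⟨a₁, b₁, h₁⟩ := hR z.1
  obtain ⟨a₂, b₂, h₂⟩ := hS z.2
  exact ⟨MulEquiv.prodUnits.symm (a₁, a₂), MulEquiv.prodUnits.symm (b₁, b₂), Prod.ext h₁ h₂⟩

theorem Function.Surjective.exists_units_sub_eq {R S F : Type*} [Ring R] [Ring S]
    [FunLike F R S] [RingHomClass F R S] {f : F} (hf : Function.Surjective f)
    (hR : ∀ x : R, ∃ a b : Rˣ, x = a - b) (y : S) :
    ∃ a b : Sˣ, y = a - b := by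
  obtain ⟨x, rfl⟩ := hf y
  obtain ⟨a, b, rfl⟩ := hR x
  exact ⟨Units.map (f : R →* S) a, Units.map (f : R →* S) b, by simp⟩

namespace ZMod

theorem isLocalRing_prime_pow {p e : ℕ} (hp : p.Prime) (he : 0 < e) :
    IsLocalRing (ZMod (p ^ e)) := by
  have : Nontrivial (ZMod (p ^ e)) :=
    nontrivial_iff.mpr (Nat.one_lt_pow he.ne' hp.one_lt).ne'
  have : NeZero (p ^ e) := ⟨pow_ne_zero e hp.ne_zero⟩
  refine .of_nonunits_add fun a b ha hb => ?_
  obtain ⟨m, rfl⟩ := natCast_zmod_surjective a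
  obtain ⟨k, rfl⟩ := natCast_zmod_surjective b
  simp only [mem_nonunits_iff, ← Nat.cast_add, isUnit_natCast_iff_not_dvd_pow hp he,
    not_not] at ha hb ⊢
  exact dvd_add ha hb

theorem isUnit_two_of_odd {n : ℕ} (hn : Odd n) : IsUnit (2 : ZMod n) := by
  exact_mod_cast (isUnit_iff_coprime 2 n).mpr (Nat.coprime_two_left.mpr hn)

theorem exists_units_sub_eq_of_odd {n : ℕ} (hn : Odd n) (x : ZMod n) :
    ∃ a b : (ZMod n)ˣ, x = a - b := by
  induction n using Nat.recOnPosPrimePosCoprime with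
  | zero => simp at hn
  | one => exact ⟨1, 1, Subsingleton.elim _ _⟩
  | prime_pow p e hp he =>
    have := isLocalRing_prime_pow hp he
    exact IsLocalRing.exists_units_sub_eq (isUnit_two_of_odd hn) x
  | coprime a b _ _ hab iha ihb =>
    obtain ⟨ha, hb⟩ := Nat.odd_mul.mp hn
    exact (chineseRemainder hab).symm.surjective.exists_units_sub_eq
      (Prod.exists_units_sub_eq (iha ha) (ihb hb)) x

end ZMod

theorem odd_zmod_every_element_diff_of_units_general
    (n : ℕ) (hnodd : Odd n) :
    ∀ x : ZMod n, ∃ a b : (ZMod n)ˣ, x = (a : ZMod n) - (b : ZMod n) :=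
  ZMod.exists_units_sub_eq_of_odd hnodd

/-- For odd `n ≥ 1`, every element of `ℤ/nℤ` is a difference of two units. -/
theorem odd_zmod_every_element_diff_of_units
    (n : ℕ) (hn : 0 < n) (hnodd : Odd n) :
    ∀ x : ZMod n, ∃ a b : (ZMod n)ˣ, x = (a : ZMod n) - (b : ZMod n) :=
  odd_zmod_every_element_diff_of_units_general n hnodd
end

section
/- Let n be a positive even integer. Then the set of differences of units of ℤ/nℤ, namely {a − b : a, b ∈ (ℤ/nℤ)^×}, equals the set {2·c : c ∈ ℤ/nℤ} of doubles of elements of ℤ/nℤ. -/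
/-!
Units of `ℤ/nℤ` reduce to `1` in `ℤ/2ℤ`, so for even `n` their differences are doubles.
Conversely, `2c = (q + c) - (q - c)` where `q` is the product of the primes of `n` not dividing
`c`: every prime of `n` divides exactly one of `q` and `c`, hence neither of `q ± c`.
-/

open Finset

lemma natCast_dvd_prod_primeFactors_not_dvd_iff {n p : ℕ} (hp : p.Prime) (c : ℤ) :
    (p : ℤ) ∣ ∏ r ∈ n.primeFactors with ¬ ((r : ℕ) : ℤ) ∣ c, (r : ℤ) ↔
      p ∈ n.primeFactors ∧ ¬ (p : ℤ) ∣ c := by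
  rw [(Nat.prime_iff_prime_int.mp hp).dvd_finsetProd_iff]
  constructor
  · rintro ⟨r, hr, hpr⟩
    obtain ⟨hrn, hrc⟩ := mem_filter.mp hr
    have hpr : p = r :=
      (Nat.prime_dvd_prime_iff_eq hp (Nat.prime_of_mem_primeFactors hrn)).mp
        (Int.natCast_dvd_natCast.mp hpr)
    exact hpr ▸ ⟨hrn, hrc⟩
  · exact fun h => ⟨p, mem_filter.mpr h, dvd_rfl⟩

lemma isCoprime_prod_primeFactors_not_dvd_add {n : ℕ} (hn : n ≠ 0) {c e : ℤ}
    (he : ∀ p : ℕ, p.Prime → ((p : ℤ) ∣ e ↔ (p : ℤ) ∣ c)) :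
    IsCoprime ((∏ r ∈ n.primeFactors with ¬ ((r : ℕ) : ℤ) ∣ c, (r : ℤ)) + e) n := by
  refine isCoprime_of_prime_dvd (fun h => hn (by exact_mod_cast h.2)) fun z hz hzqe hzn => ?_
  have hp : z.natAbs.Prime := Int.prime_iff_natAbs_prime.mp hz
  have hpn : z.natAbs ∈ n.primeFactors :=
    Nat.mem_primeFactors.mpr ⟨hp, Int.natAbs_dvd_natAbs.mpr hzn, hn⟩
  have hpqe : (z.natAbs : ℤ) ∣ _ + e := Int.natAbs_dvd.mpr hzqe
  have hpq := natCast_dvd_prod_primeFactors_not_dvd_iff (n := n) hp c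
  by_cases hpc : (z.natAbs : ℤ) ∣ c
  · exact hpq.not.mpr (fun h => h.2 hpc) ((dvd_add_left ((he _ hp).mpr hpc)).mp hpqe)
  · exact hpc ((he _ hp).mp ((dvd_add_right (hpq.mpr ⟨hpn, hpc⟩)).mp hpqe))

lemma exists_isCoprime_add_and_sub (c : ℤ) {n : ℕ} (hn : n ≠ 0) :
    ∃ q : ℤ, IsCoprime (q + c) n ∧ IsCoprime (q - c) n := by
  refine ⟨_, isCoprime_prod_primeFactors_not_dvd_add hn fun _ _ => Iff.rfl, ?_⟩
  simpa only [sub_eq_add_neg] using isCoprime_prod_primeFactors_not_dvd_add hn fun _ _ => dvd_neg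

lemma ZMod.exists_eq_mul_of_castHom_eq_zero {d n : ℕ} (h : d ∣ n) {x : ZMod n}
    (hx : ZMod.castHom h (ZMod d) x = 0) : ∃ c : ZMod n, x = d * c := by
  obtain ⟨y, rfl⟩ := ZMod.intCast_surjective x
  rw [map_intCast, ZMod.intCast_zmod_eq_zero_iff_dvd] at hx
  obtain ⟨k, rfl⟩ := hx
  exact ⟨k, by push_cast; rfl⟩

lemma ZMod.castHom_two_units_sub_eq_zero {n : ℕ} (h : 2 ∣ n) (a b : (ZMod n)ˣ) :
    ZMod.castHom h (ZMod 2) (a - b) = 0 := by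
  have hab : Units.map (ZMod.castHom h (ZMod 2)).toMonoidHom a =
      Units.map (ZMod.castHom h (ZMod 2)).toMonoidHom b := Subsingleton.elim _ _
  rw [map_sub, sub_eq_zero]
  exact congrArg Units.val hab

/-- For even `n ≥ 1`, the set of differences of units of `ℤ/nℤ` equals the set of doubles
of elements of `ℤ/nℤ`. -/
theorem even_zmod_diff_of_units_eq_doubles
    (n : ℕ) (hn : 0 < n) (hneven : Even n) :
    {x : ZMod n | ∃ a b : (ZMod n)ˣ, x = (a : ZMod n) - (b : ZMod n)}
      = {x : ZMod n | ∃ c : ZMod n, x = 2 * c} := by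
  ext x
  constructor
  · rintro ⟨a, b, rfl⟩
    exact_mod_cast ZMod.exists_eq_mul_of_castHom_eq_zero hneven.two_dvd
      (ZMod.castHom_two_units_sub_eq_zero hneven.two_dvd a b)
  · rintro ⟨c, rfl⟩
    obtain ⟨y, rfl⟩ := ZMod.intCast_surjective c
    obtain ⟨q, hadd, hsub⟩ := exists_isCoprime_add_and_sub y hn.ne'
    refine ⟨ZMod.unitOfIsCoprime _ hadd, ZMod.unitOfIsCoprime _ hsub, ?_⟩
    push_cast [ZMod.coe_unitOfIsCoprime]
    ring
end

section
/- For every n ≥ 1, the set of rational spectral units of finite order, i.e. of n×n circulant matrices U with rational entries satisfying U·Uᵀ = I and U^m = I for some integer m ≥ 1, is finite. -/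
/-!
Orthogonality makes every row of `U = circulant u` a unit vector, so `|u k| ≤ 1`. Multiplying `U`
by a power of the cyclic shift moves `u k` onto the diagonal, so `n * u k` is the trace of a
rational matrix of finite order, i.e. a sum of roots of unity, hence an algebraic integer and
therefore an integer. The entries thus lie in the finite set `(1/n)ℤ ∩ [-1, 1]`.
-/

open Matrix

theorem Rat.finite_setOf_abs_le_one_natCast_mul_eq_int {n : ℕ} (hn : n ≠ 0) :
    {q : ℚ | |q| ≤ 1 ∧ ∃ z : ℤ, n * q = z}.Finite := by
  refine ((Set.finite_Icc (-(n : ℤ)) n).image fun z : ℤ => (z : ℚ) / n).subset ?_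
  rintro q ⟨hq, z, hz⟩
  have hzq : |(z : ℚ)| ≤ n := by
    rw [← hz, abs_mul, Nat.abs_cast]
    exact mul_le_of_le_one_right n.cast_nonneg hq
  refine ⟨z, ?_, by simp only [← hz]; field_simp⟩
  rw [abs_le] at hzq
  exact ⟨by exact_mod_cast hzq.1, by exact_mod_cast hzq.2⟩

theorem spectrum.pow_eq_one_of_mem {K A : Type*} [Field K] [Ring A] [Algebra K A] {a : A}
    {N : ℕ} (ha : a ^ N = 1) {μ : K} (hμ : μ ∈ spectrum K a) : μ ^ N = 1 := by
  rcases subsingleton_or_nontrivial A with _ | _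
  · simp [spectrum.of_subsingleton] at hμ
  simpa [ha, spectrum.one_eq] using spectrum.pow_mem_pow a N hμ

namespace Matrix

section
variable {ι : Type*} [Fintype ι] [DecidableEq ι]

theorem isIntegral_trace_of_pow_eq_one {K : Type*} [Field K] {A : Matrix ι ι K} {N : ℕ}
    (hN : N ≠ 0) (hA : A ^ N = 1) : IsIntegral ℤ A.trace := by
  let f := (algebraMap K (AlgebraicClosure K)).mapMatrix (m := ι)
  have hfA : f A ^ N = 1 := by rw [← map_pow, hA, map_one]
  have hroot : ∀ μ ∈ (f A).charpoly.roots, IsIntegral ℤ μ := fun μ hμ =>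
    IsIntegral.of_pow (Nat.pos_of_ne_zero hN) <| by
      rw [spectrum.pow_eq_one_of_mem hfA <| mem_spectrum_iff_isRoot_charpoly.2 <|
        Polynomial.isRoot_of_mem_roots hμ]
      exact isIntegral_one
  rw [← isIntegral_algebraMap_iff (algebraMap K (AlgebraicClosure K)).injective,
    AddMonoidHom.map_trace, ← RingHom.mapMatrix_apply, trace_eq_sum_roots_charpoly]
  exact IsIntegral.multiset_sum hroot

theorem exists_int_trace_eq_of_pow_eq_one {A : Matrix ι ι ℚ} {N : ℕ} (hN : N ≠ 0)
    (hA : A ^ N = 1) : ∃ z : ℤ, A.trace = z :=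
  (IsIntegrallyClosed.isIntegral_iff.1 (isIntegral_trace_of_pow_eq_one hN hA)).imp
    fun _ h => h.symm

theorem abs_apply_le_one_of_mul_transpose_eq_one {R : Type*} [CommRing R] [LinearOrder R]
    [IsStrictOrderedRing R] {U : Matrix ι ι R} (hU : U * Uᵀ = 1) (i j : ι) :
    |U i j| ≤ 1 := by
  have hrow : ∑ k, U i k ^ 2 = 1 := by
    simpa [mul_apply, sq] using congrFun (congrFun hU i) i
  rw [← sq_le_one_iff_abs_le_one, ← hrow]
  exact Finset.single_le_sum (fun k _ => sq_nonneg (U i k)) (Finset.mem_univ j)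

end

variable {G R : Type*} [AddCommGroup G] [Fintype G]

theorem trace_circulant [AddCommMonoid R] (v : G → R) :
    (circulant v).trace = Fintype.card G • v 0 := by
  simp [trace, circulant_apply]

variable [DecidableEq G]

theorem circulant_mul_single_one [Semiring R] (v : G → R) (a : G) :
    circulant v * circulant (Pi.single a 1) = circulant fun i => v (i - a) := by
  rw [circulant_mul]
  congr 1
  ext i
  simp [mulVec_single]

theorem circulant_single_one_pow [Semiring R] (a : G) (j : ℕ) :
    circulant (Pi.single a (1 : R)) ^ j = circulant (Pi.single (j • a) 1) := by
  induction j with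
  | zero => simp
  | succ j ih =>
    rw [pow_succ, ih, circulant_mul_single_one, succ_nsmul]
    congr 1
    ext i
    simp [Pi.single_apply, sub_eq_iff_eq_add]

theorem circulant_single_one_pow_card [Semiring R] (a : G) :
    circulant (Pi.single a (1 : R)) ^ Fintype.card G = 1 := by
  simp [circulant_single_one_pow]

theorem exists_int_card_mul_eq_of_circulant_pow_eq_one {u : G → ℚ} {m : ℕ} (hm : m ≠ 0)
    (hu : circulant u ^ m = 1) (k : G) : ∃ z : ℤ, Fintype.card G * u k = z := by
  set W : Matrix G G ℚ := circulant (Pi.single (-k) 1)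
  have hW : (circulant u * W) ^ (m * Fintype.card G) = 1 := by
    rw [Commute.mul_pow (circulant_mul_comm u _), pow_mul, hu, one_pow, one_mul, pow_mul',
      circulant_single_one_pow_card, one_pow]
  obtain ⟨z, hz⟩ := exists_int_trace_eq_of_pow_eq_one (mul_ne_zero hm Fintype.card_ne_zero) hW
  refine ⟨z, ?_⟩
  simpa [W, circulant_mul_single_one, trace_circulant] using hz

end Matrix

theorem rational_spectral_units_of_finite_order_finite_general
    (n : ℕ) [NeZero n] :
    {U : Matrix (ZMod n) (ZMod n) ℚ |
      (∃ u : ZMod n → ℚ, U = Matrix.circulant u) ∧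
      U * Uᵀ = 1 ∧ ∃ m : ℕ, 1 ≤ m ∧ U ^ m = 1}.Finite := by
  refine ((Set.Finite.pi fun _ : ZMod n =>
    Rat.finite_setOf_abs_le_one_natCast_mul_eq_int (NeZero.ne n)).image circulant).subset ?_
  rintro U ⟨⟨u, rfl⟩, hU, m, hm, hUm⟩
  refine ⟨u, fun k _ => ⟨?_, ?_⟩, rfl⟩
  · simpa using abs_apply_le_one_of_mul_transpose_eq_one hU k 0
  · simpa using exists_int_card_mul_eq_of_circulant_pow_eq_one (by omega) hUm k

/-- For every `n ≥ 1`, the set of rational spectral units of finite order — circulant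
matrices `U` with rational entries with `U·Uᵀ = 1` and `U^m = 1` for some `m ≥ 1` —
is finite. -/
theorem rational_spectral_units_of_finite_order_finite
    (n : ℕ) [NeZero n] (hn : 0 < n) :
    {U : Matrix (ZMod n) (ZMod n) ℚ |
      (∃ u : ZMod n → ℚ, U = Matrix.circulant u) ∧
      U * Uᵀ = 1 ∧ ∃ m : ℕ, 1 ≤ m ∧ U ^ m = 1}.Finite :=
  rational_spectral_units_of_finite_order_finite_general n
end
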